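/- Let a > 0 and let F : ℝ × ℝ → ℝ be continuous such that the partial derivative of F in its first (spatial) variable exists and is continuous on ℝ². Define U₃ : ℝ × ℝ → ℝ by U₃(x,t) = (1/(2a)) ∫_0^t ∫_{x−a(t−τ)}^{x+a(t−τ)} F(ξ,τ) dξ dτ. Then ∂_{tt} U₃(x,t) − a² ∂_{xx} U₃(x,t) = F(x,t) for all (x,t) ∈ ℝ², U₃(x,0) = 0 for all x, and ∂_t U₃(x,0) = 0 for all x. -/

import Mathlib

open MeasureTheory intervalIntegral Metric Set Filter Asymptotics

/-- Differentiation under the integral sign, fixed limits, everything continuous. -/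
lemma param_hasDerivAt (g g' : ℝ → ℝ → ℝ) (c d : ℝ)
    (hg : Continuous fun p : ℝ × ℝ => g p.1 p.2)
    (hg' : ∀ y τ, HasDerivAt (fun z => g z τ) (g' y τ) y)
    (hg'c : Continuous fun p : ℝ × ℝ => g' p.1 p.2)
    (x : ℝ) :
    HasDerivAt (fun y => ∫ τ in c..d, g y τ) (∫ τ in c..d, g' x τ) x := by
  have contτ : ∀ y, Continuous fun τ => g y τ :=
    fun y => hg.comp (continuous_const.prodMk continuous_id)
  have contτ' : ∀ y, Continuous fun τ => g' y τ :=
    fun y => hg'c.comp (continuous_const.prodMk continuous_id)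
  have hK : IsCompact (Icc (x - 1) (x + 1) ×ˢ uIcc c d) :=
    isCompact_Icc.prod isCompact_uIcc
  obtain ⟨M, hM⟩ := hK.exists_bound_of_continuousOn hg'c.continuousOn
  have := intervalIntegral.hasDerivAt_integral_of_dominated_loc_of_deriv_le
    (F := fun y τ => g y τ) (F' := fun y τ => g' y τ) (x₀ := x)
    (bound := fun _ => M) (μ := volume) (a := c) (b := d)
    (ball_mem_nhds x one_pos)
    (Eventually.of_forall fun y => (contτ y).aestronglyMeasurable)
    ((contτ x).intervalIntegrable c d)
    ((contτ' x).aestronglyMeasurable)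
    (Eventually.of_forall fun τ hτ y hy => by
      have : (y, τ) ∈ Icc (x - 1) (x + 1) ×ˢ uIcc c d := by
        constructor
        · have := mem_ball_iff_norm.1 hy
          rw [Real.norm_eq_abs, abs_sub_lt_iff] at this
          constructor <;> linarith [this.1, this.2]
        · exact mem_Icc_of_Ioc hτ
      exact hM (y, τ) this)
    (intervalIntegrable_const)
    (Eventually.of_forall fun τ _ y _ => hg' y τ)
  exact this.2

/-- Leibniz rule: derivative of `u ↦ ∫_0^u g u τ dτ`. -/
lemma leibniz_hasDerivAt (g g' : ℝ → ℝ → ℝ)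
    (hg : Continuous fun p : ℝ × ℝ => g p.1 p.2)
    (hg' : ∀ t τ, HasDerivAt (fun u => g u τ) (g' t τ) t)
    (hg'c : Continuous fun p : ℝ × ℝ => g' p.1 p.2)
    (t : ℝ) :
    HasDerivAt (fun u => ∫ τ in (0:ℝ)..u, g u τ)
      (g t t + ∫ τ in (0:ℝ)..t, g' t τ) t := by
  have contτ : ∀ y, Continuous fun τ => g y τ :=
    fun y => hg.comp (continuous_const.prodMk continuous_id)
  -- bound for g' near the diagonal
  have hK : IsCompact (Icc (t - 1) (t + 1) ×ˢ Icc (t - 1) (t + 1)) :=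
    isCompact_Icc.prod isCompact_Icc
  obtain ⟨M₀, hM₀⟩ := hK.exists_bound_of_continuousOn hg'c.continuousOn
  set M := max M₀ 0 with hMdef
  have hM : ∀ p ∈ Icc (t - 1) (t + 1) ×ˢ Icc (t - 1) (t + 1), ‖g' p.1 p.2‖ ≤ M :=
    fun p hp => le_trans (hM₀ p hp) (le_max_left _ _)
  have hM0 : 0 ≤ M := le_max_right _ _
  -- term A : fixed limits
  have hA : HasDerivAt (fun u => ∫ τ in (0:ℝ)..t, g u τ)
      (∫ τ in (0:ℝ)..t, g' t τ) t :=
    param_hasDerivAt g g' 0 t hg hg' hg'c t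
  -- term B1 : FTC
  have hB1 : HasDerivAt (fun u => ∫ τ in t..u, g t τ) (g t t) t :=
    intervalIntegral.integral_hasDerivAt_right ((contτ t).intervalIntegrable t t)
      ((contτ t).stronglyMeasurableAtFilter volume (nhds t)) (contτ t).continuousAt
  -- term E : error term, little-o
  have hE : HasDerivAt (fun u => ∫ τ in t..u, (g u τ - g t τ)) 0 t := by
    rw [hasDerivAt_iff_isLittleO]
    have key : ∀ u : ℝ, |u - t| < 1 →
        ‖∫ τ in t..u, (g u τ - g t τ)‖ ≤ M * |u - t| * |u - t| := by
      intro u hu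
      have hus : u ∈ Icc (t - 1) (t + 1) := by
        rw [abs_sub_lt_iff] at hu
        constructor <;> linarith [hu.1, hu.2]
      have hts : t ∈ Icc (t - 1) (t + 1) := by
        constructor <;> linarith
      have hb : ∀ τ ∈ Set.uIoc t u, ‖g u τ - g t τ‖ ≤ M * |u - t| := by
        intro τ hτ
        have hτs : τ ∈ Icc (t - 1) (t + 1) := by
          have h1 : τ ∈ uIcc t u := mem_Icc_of_Ioc hτ
          exact uIcc_subset_Icc hts hus h1
        have := Convex.norm_image_sub_le_of_norm_hasDerivWithin_le
          (f := fun z => g z τ) (f' := fun z => g' z τ)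
          (s := Icc (t - 1) (t + 1)) (C := M)
          (fun v hv => (hg' v τ).hasDerivWithinAt)
          (fun v hv => hM (v, τ) ⟨hv, hτs⟩)
          (convex_Icc _ _) hts hus
        simpa [Real.norm_eq_abs] using this
      have hnorm := intervalIntegral.norm_integral_le_of_norm_le_const hb
      exact hnorm
    have h1 : (fun u => ∫ τ in t..u, (g u τ - g t τ))
        =O[nhds t] fun u => (u - t) * (u - t) := by
      apply IsBigO.of_bound M
      have : ∀ᶠ u in nhds t, |u - t| < 1 := by
        have : Tendsto (fun u : ℝ => |u - t|) (nhds t) (nhds 0) := by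
          have : Tendsto (fun u : ℝ => u - t) (nhds t) (nhds 0) := by
            simpa using (tendsto_id (x := nhds t)).sub_const t
          simpa using this.abs
        exact this.eventually_lt_const one_pos
      filter_upwards [this] with u hu
      calc ‖∫ τ in t..u, (g u τ - g t τ)‖ ≤ M * |u - t| * |u - t| := key u hu
        _ = M * ‖(u - t) * (u - t)‖ := by
            rw [Real.norm_eq_abs, abs_mul]; ring
    have h2 : (fun u : ℝ => (u - t) * (u - t)) =o[nhds t] fun u => u - t := by
      have hlim : Tendsto (fun u : ℝ => u - t) (nhds t) (nhds 0) := by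
        simpa using (tendsto_id (x := nhds t)).sub_const t
      have := ((isLittleO_one_iff ℝ).2 hlim).mul_isBigO
        (isBigO_refl (fun u : ℝ => u - t) (nhds t))
      simpa using this
    have := h1.trans_isLittleO h2
    simpa [intervalIntegral.integral_same] using this
  -- combine B = B1 + E
  have hB : HasDerivAt (fun u => ∫ τ in t..u, g u τ) (g t t) t := by
    have heq : (fun u => ∫ τ in t..u, g u τ)
        = fun u => (∫ τ in t..u, g t τ) + ∫ τ in t..u, (g u τ - g t τ) := by
      funext u
      rw [← intervalIntegral.integral_add (g := fun τ => g u τ - g t τ)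
        ((contτ t).intervalIntegrable t u)
        (((contτ u).sub (contτ t)).intervalIntegrable t u)]
      simp
    rw [heq]
    have hBsum : HasDerivAt
        (fun u => (∫ τ in t..u, g t τ) + ∫ τ in t..u, (g u τ - g t τ)) _ t := hB1.add hE
    simpa using hBsum
  -- combine A + B
  have heq : (fun u => ∫ τ in (0:ℝ)..u, g u τ)
      = fun u => (∫ τ in (0:ℝ)..t, g u τ) + ∫ τ in t..u, g u τ := by
    funext u
    rw [intervalIntegral.integral_add_adjacent_intervals
      ((contτ u).intervalIntegrable 0 t) ((contτ u).intervalIntegrable t u)]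
  rw [heq]
  have : HasDerivAt (fun u => (∫ τ in (0:ℝ)..t, g u τ) + ∫ τ in t..u, g u τ) _ t :=
    hA.add hB
  convert this using 1
  ring

/-- Lemma C.2, second relation (Duhamel's principle): the double integral
`U₃(x,t) = (1/(2a)) ∫_0^t ∫_{x−a(t−τ)}^{x+a(t−τ)} F(ξ,τ) dξ dτ` solves the
inhomogeneous wave equation with zero initial position and velocity. -/
theorem duhamel_principle
    (a : ℝ) (ha : 0 < a) (F : ℝ → ℝ → ℝ)
    (hF : Continuous fun p : ℝ × ℝ => F p.1 p.2)
    (hFx : ∀ p : ℝ × ℝ, DifferentiableAt ℝ (fun x => F x p.2) p.1)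
    (hFx_cont : Continuous fun p : ℝ × ℝ => deriv (fun x => F x p.2) p.1)
    (U₃ : ℝ → ℝ → ℝ)
    (hU₃ : ∀ x t, U₃ x t = (1 / (2 * a)) * ∫ τ in (0 : ℝ)..t,
        ∫ ξ in (x - a * (t - τ))..(x + a * (t - τ)), F ξ τ) :
    (∀ x t : ℝ,
        deriv (deriv (U₃ x)) t - a ^ 2 * deriv (fun y => deriv (fun z => U₃ z t) y) x
          = F x t) ∧
    (∀ x : ℝ, U₃ x 0 = 0) ∧
    (∀ x : ℝ, deriv (U₃ x) 0 = 0) := by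
  have haane : a ≠ 0 := ne_of_gt ha
  have contF1 : ∀ τ, Continuous fun ξ => F ξ τ := fun τ => by fun_prop
  obtain ⟨Fx, hFderiv, hFxc⟩ : ∃ Fx : ℝ → ℝ → ℝ,
      (∀ y τ, HasDerivAt (fun z => F z τ) (Fx y τ) y) ∧
      Continuous (fun p : ℝ × ℝ => Fx p.1 p.2) :=
    ⟨fun y τ => deriv (fun z => F z τ) y,
      fun y τ => (hFx (y, τ)).hasDerivAt, hFx_cont⟩
  -- the primitive in the space variable
  obtain ⟨Φ, hΦcont, hΦderiv, hΦdef⟩ : ∃ Φ : ℝ → ℝ → ℝ,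
      Continuous (fun p : ℝ × ℝ => Φ p.1 p.2) ∧
      (∀ y τ, HasDerivAt (fun z => Φ z τ) (F y τ) y) ∧
      (∀ y τ, Φ y τ = ∫ ξ in (0:ℝ)..y, F ξ τ) := by
    refine ⟨fun y τ => ∫ ξ in (0:ℝ)..y, F ξ τ, ?_, ?_, fun y τ => rfl⟩
    · exact intervalIntegral.continuous_parametric_intervalIntegral_of_continuous
        (f := fun (p : ℝ × ℝ) ξ => F ξ p.2) (by fun_prop) continuous_fst
    · intro y τ
      exact intervalIntegral.integral_hasDerivAt_right ((contF1 τ).intervalIntegrable 0 y)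
        ((contF1 τ).stronglyMeasurableAtFilter volume (nhds y)) (contF1 τ).continuousAt
  -- rewrite U₃ via the primitive
  have hU3' : ∀ x t, U₃ x t
      = (1 / (2 * a)) * ∫ τ in (0:ℝ)..t,
          (Φ (x + a * (t - τ)) τ - Φ (x - a * (t - τ)) τ) := by
    intro x t
    rw [hU₃]
    congr 1
    apply intervalIntegral.integral_congr
    intro τ _
    simp only [hΦdef]
    exact (intervalIntegral.integral_interval_sub_left
      ((contF1 τ).intervalIntegrable 0 _) ((contF1 τ).intervalIntegrable 0 _)).symm
  -- first time derivative
  have key1 : ∀ x t, HasDerivAt (U₃ x)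
      ((1 / (2 * a)) * ∫ τ in (0:ℝ)..t,
        (a * F (x + a * (t - τ)) τ + a * F (x - a * (t - τ)) τ)) t := by
    intro x t
    have hUeq : U₃ x = fun u => (1 / (2 * a)) * ∫ τ in (0:ℝ)..u,
        (Φ (x + a * (u - τ)) τ - Φ (x - a * (u - τ)) τ) := funext fun u => hU3' x u
    rw [hUeq]
    have hL := leibniz_hasDerivAt
      (fun u τ => Φ (x + a * (u - τ)) τ - Φ (x - a * (u - τ)) τ)
      (fun u τ => a * F (x + a * (u - τ)) τ + a * F (x - a * (u - τ)) τ)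
      (by fun_prop)
      (fun u τ => by
        have h1 : HasDerivAt (fun v : ℝ => x + a * (v - τ)) a u := by
          simpa using (((hasDerivAt_id u).sub_const τ).const_mul a).const_add x
        have h2 : HasDerivAt (fun v : ℝ => x - a * (v - τ)) (-a) u := by
          simpa using HasDerivAt.const_sub x (((hasDerivAt_id u).sub_const τ).const_mul a)
        have c1 : HasDerivAt (fun v => Φ (x + a * (v - τ)) τ)
            (F (x + a * (u - τ)) τ * a) u := ((hΦderiv (x + a * (u - τ)) τ).comp u h1 :)
        have c2 : HasDerivAt (fun v => Φ (x - a * (v - τ)) τ)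
            (F (x - a * (u - τ)) τ * (-a)) u := ((hΦderiv (x - a * (u - τ)) τ).comp u h2 :)
        have : HasDerivAt (fun v => Φ (x + a * (v - τ)) τ - Φ (x - a * (v - τ)) τ) _ u :=
          c1.sub c2
        convert this using 1
        ring)
      (by fun_prop) t
    simp only [sub_self, mul_zero, add_zero, sub_zero] at hL
    simpa using hL.const_mul (1 / (2 * a))
  constructor
  · intro x t
    -- compute deriv (U₃ x)
    have hd1 : deriv (U₃ x) = fun t => (1 / (2 * a)) * ∫ τ in (0:ℝ)..t,
        (a * F (x + a * (t - τ)) τ + a * F (x - a * (t - τ)) τ) :=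
      funext fun t => (key1 x t).deriv
    -- second time derivative
    have key2 : HasDerivAt (fun u => ∫ τ in (0:ℝ)..u,
        (a * F (x + a * (u - τ)) τ + a * F (x - a * (u - τ)) τ))
        ((a * F (x + a * (t - t)) t + a * F (x - a * (t - t)) t)
          + ∫ τ in (0:ℝ)..t,
            (a ^ 2 * Fx (x + a * (t - τ)) τ - a ^ 2 * Fx (x - a * (t - τ)) τ)) t := by
      apply leibniz_hasDerivAt
        (fun u τ => a * F (x + a * (u - τ)) τ + a * F (x - a * (u - τ)) τ)
        (fun u τ => a ^ 2 * Fx (x + a * (u - τ)) τ - a ^ 2 * Fx (x - a * (u - τ)) τ)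
        (by fun_prop)
        (fun u τ => by
          have h1 : HasDerivAt (fun v : ℝ => x + a * (v - τ)) a u := by
            simpa using (((hasDerivAt_id u).sub_const τ).const_mul a).const_add x
          have h2 : HasDerivAt (fun v : ℝ => x - a * (v - τ)) (-a) u := by
            simpa using HasDerivAt.const_sub x (((hasDerivAt_id u).sub_const τ).const_mul a)
          have c1 : HasDerivAt (fun v => F (x + a * (v - τ)) τ)
              (Fx (x + a * (u - τ)) τ * a) u := ((hFderiv (x + a * (u - τ)) τ).comp u h1 :)
          have c2 : HasDerivAt (fun v => F (x - a * (v - τ)) τ)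
              (Fx (x - a * (u - τ)) τ * (-a)) u := ((hFderiv (x - a * (u - τ)) τ).comp u h2 :)
          have : HasDerivAt
              (fun v => a * F (x + a * (v - τ)) τ + a * F (x - a * (v - τ)) τ) _ u :=
            (c1.const_mul a).add (c2.const_mul a)
          convert this using 1
          ring)
        (by fun_prop)
    have hd2 : deriv (deriv (U₃ x)) t
        = (1 / (2 * a)) * ((a * F (x + a * (t - t)) t + a * F (x - a * (t - t)) t)
          + ∫ τ in (0:ℝ)..t,
            (a ^ 2 * Fx (x + a * (t - τ)) τ - a ^ 2 * Fx (x - a * (t - τ)) τ)) := by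
      rw [hd1]
      exact (key2.const_mul (1 / (2 * a))).deriv
    -- x derivatives
    have keyx : ∀ y : ℝ, HasDerivAt (fun z => U₃ z t)
        ((1 / (2 * a)) * ∫ τ in (0:ℝ)..t,
          (F (y + a * (t - τ)) τ - F (y - a * (t - τ)) τ)) y := by
      intro y
      have hUeq : (fun z => U₃ z t) = fun z => (1 / (2 * a)) * ∫ τ in (0:ℝ)..t,
          (Φ (z + a * (t - τ)) τ - Φ (z - a * (t - τ)) τ) := funext fun z => hU3' z t
      rw [hUeq]
      have hP := param_hasDerivAt
        (fun z τ => Φ (z + a * (t - τ)) τ - Φ (z - a * (t - τ)) τ)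
        (fun z τ => F (z + a * (t - τ)) τ - F (z - a * (t - τ)) τ) 0 t
        (by fun_prop)
        (fun z τ => by
          have h1 : HasDerivAt (fun w : ℝ => w + a * (t - τ)) 1 z :=
            (hasDerivAt_id z).add_const _
          have h2 : HasDerivAt (fun w : ℝ => w - a * (t - τ)) 1 z :=
            (hasDerivAt_id z).sub_const _
          have c1 : HasDerivAt (fun w => Φ (w + a * (t - τ)) τ)
              (F (z + a * (t - τ)) τ * 1) z := ((hΦderiv (z + a * (t - τ)) τ).comp z h1 :)
          have c2 : HasDerivAt (fun w => Φ (w - a * (t - τ)) τ)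
              (F (z - a * (t - τ)) τ * 1) z := ((hΦderiv (z - a * (t - τ)) τ).comp z h2 :)
          have : HasDerivAt (fun w => Φ (w + a * (t - τ)) τ - Φ (w - a * (t - τ)) τ) _ z :=
            c1.sub c2
          convert this using 1
          ring)
        (by fun_prop) y
      exact hP.const_mul (1 / (2 * a))
    have hdx1 : deriv (fun z => U₃ z t) = fun y => (1 / (2 * a)) * ∫ τ in (0:ℝ)..t,
        (F (y + a * (t - τ)) τ - F (y - a * (t - τ)) τ) :=
      funext fun y => (keyx y).deriv
    have keyx2 : HasDerivAt (fun y => ∫ τ in (0:ℝ)..t,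
        (F (y + a * (t - τ)) τ - F (y - a * (t - τ)) τ))
        (∫ τ in (0:ℝ)..t, (Fx (x + a * (t - τ)) τ - Fx (x - a * (t - τ)) τ)) x := by
      apply param_hasDerivAt
        (fun y τ => F (y + a * (t - τ)) τ - F (y - a * (t - τ)) τ)
        (fun y τ => Fx (y + a * (t - τ)) τ - Fx (y - a * (t - τ)) τ) 0 t
        (by fun_prop)
        (fun y τ => by
          have h1 : HasDerivAt (fun w : ℝ => w + a * (t - τ)) 1 y :=
            (hasDerivAt_id y).add_const _
          have h2 : HasDerivAt (fun w : ℝ => w - a * (t - τ)) 1 y :=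
            (hasDerivAt_id y).sub_const _
          have c1 : HasDerivAt (fun w => F (w + a * (t - τ)) τ)
              (Fx (y + a * (t - τ)) τ * 1) y := ((hFderiv (y + a * (t - τ)) τ).comp y h1 :)
          have c2 : HasDerivAt (fun w => F (w - a * (t - τ)) τ)
              (Fx (y - a * (t - τ)) τ * 1) y := ((hFderiv (y - a * (t - τ)) τ).comp y h2 :)
          have : HasDerivAt (fun w => F (w + a * (t - τ)) τ - F (w - a * (t - τ)) τ) _ y :=
            c1.sub c2
          convert this using 1
          ring)
        (by fun_prop)
    have hdx2 : deriv (fun y => deriv (fun z => U₃ z t) y) x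
        = (1 / (2 * a)) * ∫ τ in (0:ℝ)..t,
            (Fx (x + a * (t - τ)) τ - Fx (x - a * (t - τ)) τ) := by
      have : (fun y => deriv (fun z => U₃ z t) y) = deriv (fun z => U₃ z t) := rfl
      rw [this, hdx1]
      exact (keyx2.const_mul (1 / (2 * a))).deriv
    rw [hd2, hdx2]
    -- pull out a² from the integral
    have hint : (∫ τ in (0:ℝ)..t,
        (a ^ 2 * Fx (x + a * (t - τ)) τ - a ^ 2 * Fx (x - a * (t - τ)) τ))
        = a ^ 2 * ∫ τ in (0:ℝ)..t,
            (Fx (x + a * (t - τ)) τ - Fx (x - a * (t - τ)) τ) := by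
      rw [← intervalIntegral.integral_const_mul]
      apply intervalIntegral.integral_congr
      intro τ _
      ring
    rw [hint]
    have : a * (t - t) = 0 := by ring
    rw [this]
    simp only [add_zero, sub_zero]
    field_simp
    ring
  constructor
  · intro x
    rw [hU₃]
    simp
  · intro x
    have := (key1 x 0).deriv
    simpa using this
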